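/- Let M ≥ m > 0 and A a bounded linear operator on a complex Hilbert space such that Re⟨Mx − Ax, Ax − mx⟩ ≥ 0 for all unit vectors x. Then ‖A‖ ≤ ((M + m)/(2·sqrt(mM)))·w(A). -/

import Mathlib

noncomputable def numRadius {H : Type*} [NormedAddCommGroup H] [InnerProductSpace ℂ H]
    (T : H →L[ℂ] H) : ℝ :=
  sSup {r : ℝ | ∃ x : H, ‖x‖ = 1 ∧ r = ‖(inner ℂ (T x) x : ℂ)‖}

/-! The hypothesis expands to `‖Ax‖² + mM ≤ (M + m) Re⟨Ax, x⟩` on unit vectors. Bounding the left side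
below by AM-GM, `2 √(mM) ‖Ax‖ ≤ ‖Ax‖² + mM`, and the right side above by `(M + m) w(A)` gives
`‖Ax‖ ≤ (M + m) / (2 √(mM)) · w(A)` for every unit vector `x`. -/

open RCLike

section InnerProduct

variable {𝕜 E : Type*} [RCLike 𝕜] [SeminormedAddCommGroup E] [InnerProductSpace 𝕜 E]

theorem re_inner_smul_sub_sub_smul (a b : ℝ) (x y : E) :
    re (inner 𝕜 ((a : 𝕜) • x - y) (y - (b : 𝕜) • x)) =
      (a + b) * re (inner 𝕜 y x) - a * b * ‖x‖ ^ 2 - ‖y‖ ^ 2 := by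
  simp only [inner_sub_left, inner_sub_right, inner_smul_left, inner_smul_right, conj_ofReal,
    map_sub, re_ofReal_mul, inner_self_eq_norm_sq, inner_re_symm (𝕜 := 𝕜) x y]
  ring

theorem two_mul_sqrt_mul_norm_le_mul_norm_inner {a b : ℝ} (ha : 0 ≤ a) (hb : 0 ≤ b)
    {x y : E} (hx : ‖x‖ = 1) (h : 0 ≤ re (inner 𝕜 ((a : 𝕜) • x - y) (y - (b : 𝕜) • x))) :
    2 * √(b * a) * ‖y‖ ≤ (a + b) * ‖inner 𝕜 y x‖ :=
  calc 2 * √(b * a) * ‖y‖ ≤ b * a + ‖y‖ ^ 2 := by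
        simpa [Real.sq_sqrt (mul_nonneg hb ha)] using two_mul_le_add_sq √(b * a) ‖y‖
    _ ≤ (a + b) * re (inner 𝕜 y x) := by
        rw [re_inner_smul_sub_sub_smul, hx] at h
        linarith
    _ ≤ (a + b) * ‖inner 𝕜 y x‖ := by gcongr; exact re_le_norm _

end InnerProduct

section NumRadius

variable {H : Type*} [NormedAddCommGroup H] [InnerProductSpace ℂ H]

theorem norm_inner_le_numRadius (T : H →L[ℂ] H) {x : H} (hx : ‖x‖ = 1) :
    ‖inner ℂ (T x) x‖ ≤ numRadius T := by
  refine le_csSup ⟨‖T‖, ?_⟩ ⟨x, hx, rfl⟩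
  rintro r ⟨y, hy, rfl⟩
  simpa [hy] using (norm_inner_le_norm (𝕜 := ℂ) (T y) y).trans
    (mul_le_mul_of_nonneg_right (T.le_opNorm y) (norm_nonneg y))

theorem numRadius_nonneg (T : H →L[ℂ] H) : 0 ≤ numRadius T :=
  Real.sSup_nonneg fun _ ⟨_, _, hr⟩ => hr ▸ norm_nonneg _

end NumRadius

theorem stmt_15_general {H : Type*} [NormedAddCommGroup H] [InnerProductSpace ℂ H]
    (A : H →L[ℂ] H) (m M : ℝ) (hm : 0 < m) (hmM : m ≤ M)
    (h : ∀ x : H, ‖x‖ = 1 →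
      0 ≤ (inner ℂ ((M : ℂ) • x - A x) (A x - (m : ℂ) • x) : ℂ).re) :
    ‖A‖ ≤ ((M + m) / (2 * Real.sqrt (m * M))) * numRadius A := by
  have hM : 0 < M := hm.trans_le hmM
  have hsqrt : 0 < 2 * √(m * M) := by positivity
  have hbound : 0 ≤ (M + m) / (2 * √(m * M)) * numRadius A :=
    mul_nonneg (div_nonneg (by linarith) hsqrt.le) (numRadius_nonneg A)
  refine A.opNorm_le_of_unit_norm hbound fun x hx => ?_
  rw [div_mul_eq_mul_div, le_div_iff₀ hsqrt, mul_comm]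
  calc 2 * √(m * M) * ‖A x‖ ≤ (M + m) * ‖inner ℂ (A x) x‖ :=
        two_mul_sqrt_mul_norm_le_mul_norm_inner hM.le hm.le hx (h x hx)
    _ ≤ (M + m) * numRadius A := by
        gcongr
        exact norm_inner_le_numRadius A hx

theorem stmt_15 {H : Type*} [NormedAddCommGroup H] [InnerProductSpace ℂ H] [CompleteSpace H]
    (A : H →L[ℂ] H) (m M : ℝ) (hm : 0 < m) (hmM : m ≤ M)
    (h : ∀ x : H, ‖x‖ = 1 →
      0 ≤ (inner ℂ ((M : ℂ) • x - A x) (A x - (m : ℂ) • x) : ℂ).re) :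
    ‖A‖ ≤ ((M + m) / (2 * Real.sqrt (m * M))) * numRadius A :=
  stmt_15_general A m M hm hmM h
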